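/- For every integer ν ≥ 1, the number of n-colour self-inverse compositions of 2ν into an even number of parts equals Σ_{m=1}^{ν} C(ν+m−1, 2m−1). -/

import Mathlib

/-- An n-colour composition of `ν` is a list of pairs `(p, c)` with `1 ≤ c ≤ p`
whose parts `p` sum to `ν`. -/
def IsNColourComposition (ν : ℕ) (l : List (ℕ × ℕ)) : Prop :=
  (∀ pc ∈ l, 1 ≤ pc.2 ∧ pc.2 ≤ pc.1) ∧ (l.map Prod.fst).sum = ν

open Finset

/-- Triangular sum swap. -/
lemma tri_swap (a b : ℕ) (f : ℕ → ℕ → ℕ) :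
    ∑ i ∈ Icc a b, ∑ j ∈ Icc i b, f i j = ∑ j ∈ Icc a b, ∑ i ∈ Icc a j, f i j := by
  have L : ∀ i ∈ Icc a b, ∑ j ∈ Icc i b, f i j
      = ∑ j ∈ Icc a b, if i ≤ j then f i j else 0 := by
    intro i hi
    rw [mem_Icc] at hi
    have : Icc i b = (Icc a b).filter (fun j => i ≤ j) := by
      ext j; simp only [mem_Icc, mem_filter]; omega
    rw [this, sum_filter]
  have R : ∀ j ∈ Icc a b, ∑ i ∈ Icc a j, f i j
      = ∑ i ∈ Icc a b, if i ≤ j then f i j else 0 := by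
    intro j hj
    rw [mem_Icc] at hj
    have : Icc a j = (Icc a b).filter (fun i => i ≤ j) := by
      ext i; simp only [mem_Icc, mem_filter]; omega
    rw [this, sum_filter]
  rw [sum_congr rfl L, sum_congr rfl R, sum_comm]

/-- Weighted hockey stick. -/
lemma wsum (r M : ℕ) :
    ∑ i ∈ Icc r M, (M + 1 - i) * Nat.choose i r = Nat.choose (M + 2) (r + 2) := by
  have h1 : ∀ i ∈ Icc r M, (M + 1 - i) * Nat.choose i r
      = ∑ _j ∈ Icc i M, Nat.choose i r := by
    intro i hi
    rw [sum_const, Nat.card_Icc, smul_eq_mul]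
  rw [sum_congr rfl h1, tri_swap r M (fun i _ => Nat.choose i r)]
  have h2 : ∀ j ∈ Icc r M, ∑ i ∈ Icc r j, Nat.choose i r = Nat.choose (j + 1) (r + 1) := by
    intro j _
    exact Nat.sum_Icc_choose j r
  rw [sum_congr rfl h2]
  have h3 : ∑ j ∈ Icc r M, Nat.choose (j + 1) (r + 1)
      = ∑ j ∈ Icc (r + 1) (M + 1), Nat.choose j (r + 1) := by
    refine Finset.sum_nbij' (fun j => j + 1) (fun j => j - 1) ?_ ?_ ?_ ?_ ?_
    · intro j hj; rw [mem_Icc] at *; omega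
    · intro j hj; rw [mem_Icc] at *; omega
    · intro j hj; omega
    · intro j hj; rw [mem_Icc] at hj; omega
    · intro j hj; rfl
  rw [h3, Nat.sum_Icc_choose]

/-- The target sum. -/
def Sval (ν : ℕ) : ℕ := ∑ m ∈ Icc 1 ν, Nat.choose (ν + m - 1) (2 * m - 1)

lemma Sval_extend {q ν : ℕ} (hq : q ≤ ν) :
    Sval q = ∑ m ∈ Icc 1 ν, Nat.choose (q + m - 1) (2 * m - 1) := by
  unfold Sval
  refine Finset.sum_subset (Finset.Icc_subset_Icc_right hq) ?_
  intro m hm hnot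
  rw [mem_Icc] at hm hnot
  exact Nat.choose_eq_zero_of_lt (by omega)

lemma innerChooseSum (ν m : ℕ) (hm : 1 ≤ m) :
    ∑ q ∈ Icc 1 ν, (ν + 1 - q) * Nat.choose (q + m - 1) (2 * m - 1)
      = Nat.choose (ν + m + 1) (2 * m + 1) := by
  have step : ∑ q ∈ Icc 1 ν, (ν + 1 - q) * Nat.choose (q + m - 1) (2 * m - 1)
      = ∑ i ∈ Icc m (ν + m - 1), (ν + m - i) * Nat.choose i (2 * m - 1) := by
    refine Finset.sum_nbij' (fun q => q + m - 1) (fun i => i + 1 - m) ?_ ?_ ?_ ?_ ?_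
    · intro q hq; rw [mem_Icc] at *; omega
    · intro i hi; rw [mem_Icc] at *; omega
    · intro q hq; rw [mem_Icc] at hq; omega
    · intro i hi; rw [mem_Icc] at hi; omega
    · intro q hq; rw [mem_Icc] at hq
      congr 1
      omega
  rw [step]
  have step2 : ∑ i ∈ Icc m (ν + m - 1), (ν + m - i) * Nat.choose i (2 * m - 1)
      = ∑ i ∈ Icc (2 * m - 1) (ν + m - 1), (ν + m - i) * Nat.choose i (2 * m - 1) := by
    refine (Finset.sum_subset (Finset.Icc_subset_Icc_left (by omega)) ?_).symm
    intro i hi hnot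
    rw [mem_Icc] at hi hnot
    rw [Nat.choose_eq_zero_of_lt (by omega), Nat.mul_zero]
  rw [step2]
  have := wsum (2 * m - 1) (ν + m - 1)
  have e1 : ∀ i, ν + m - 1 + 1 - i = ν + m - i := by intro i; omega
  simp only [e1] at this
  rw [this]
  congr 1 <;> omega

lemma keyS (ν : ℕ) :
    Sval (ν + 1) = (ν + 1) + ∑ q ∈ Icc 1 ν, (ν + 1 - q) * Sval q := by
  have h1 : ∑ q ∈ Icc 1 ν, (ν + 1 - q) * Sval q
      = ∑ m ∈ Icc 1 ν, Nat.choose (ν + m + 1) (2 * m + 1) := by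
    calc ∑ q ∈ Icc 1 ν, (ν + 1 - q) * Sval q
        = ∑ q ∈ Icc 1 ν, ∑ m ∈ Icc 1 ν,
            (ν + 1 - q) * Nat.choose (q + m - 1) (2 * m - 1) := by
          refine sum_congr rfl fun q hq => ?_
          rw [mem_Icc] at hq
          rw [Sval_extend hq.2, Finset.mul_sum]
      _ = ∑ m ∈ Icc 1 ν, ∑ q ∈ Icc 1 ν,
            (ν + 1 - q) * Nat.choose (q + m - 1) (2 * m - 1) := sum_comm
      _ = ∑ m ∈ Icc 1 ν, Nat.choose (ν + m + 1) (2 * m + 1) := by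
          refine sum_congr rfl fun m hm => ?_
          rw [mem_Icc] at hm
          exact innerChooseSum ν m hm.1
  rw [h1]
  unfold Sval
  have hins : Icc 1 (ν + 1) = insert 1 (Icc 2 (ν + 1)) := by
    ext x; simp only [mem_Icc, mem_insert]; omega
  rw [hins, sum_insert (by simp)]
  have : Nat.choose (ν + 1 + 1 - 1) (2 * 1 - 1) = ν + 1 := by
    norm_num
  rw [this]
  congr 1
  refine (Finset.sum_nbij' (fun m => m + 1) (fun m => m - 1) ?_ ?_ ?_ ?_ ?_).symm
  · intro m hm; rw [mem_Icc] at *; omega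
  · intro m hm; rw [mem_Icc] at *; omega
  · intro m hm; rw [mem_Icc] at hm; omega
  · intro m hm; rw [mem_Icc] at hm; omega
  · intro m hm; rw [mem_Icc] at hm
    congr 1 <;> omega

abbrev NCC (ν : ℕ) := {l : List (ℕ × ℕ) // IsNColourComposition ν l}

lemma sum_facts : ∀ (L : List ℕ), (∀ x ∈ L, 1 ≤ x) →
    L.length ≤ L.sum ∧ ∀ x ∈ L, x ≤ L.sum := by
  intro L
  induction L with
  | nil => simp
  | cons a t ih =>
    intro h
    have ht := ih (fun x hx => h x (List.mem_cons_of_mem a hx))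
    have ha := h a (List.mem_cons_self)
    constructor
    · simp only [List.length_cons, List.sum_cons]; omega
    · intro x hx
      rcases List.mem_cons.mp hx with rfl | hx
      · simp only [List.sum_cons]; omega
      · have := ht.2 x hx; simp only [List.sum_cons]; omega

lemma ncc_bounds {ν : ℕ} {l : List (ℕ × ℕ)} (h : IsNColourComposition ν l) :
    l.length ≤ ν ∧ ∀ pc ∈ l, pc.1 ≤ ν ∧ pc.2 ≤ ν := by
  have hpos : ∀ x ∈ l.map Prod.fst, 1 ≤ x := by
    intro x hx
    obtain ⟨pc, hpc, rfl⟩ := List.mem_map.mp hx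
    have := h.1 pc hpc; omega
  have hf := sum_facts _ hpos
  rw [h.2, List.length_map] at hf
  refine ⟨hf.1, fun pc hpc => ?_⟩
  have h1 := hf.2 pc.1 (List.mem_map_of_mem (f := Prod.fst) hpc)
  have h2 := (h.1 pc hpc).2
  omega

instance NCC.finite (ν : ℕ) : Finite (NCC ν) := by
  classical
  haveI : Finite {l : List (Fin (ν + 1) × Fin (ν + 1)) | l.length ≤ ν} :=
    (List.finite_length_le _ ν).to_subtype
  set g : ℕ × ℕ → Fin (ν + 1) × Fin (ν + 1) :=
    fun pc => (⟨min pc.1 ν, by omega⟩, ⟨min pc.2 ν, by omega⟩) with hg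
  have key : ∀ (l1 l2 : List (ℕ × ℕ)), (∀ pc ∈ l1, pc.1 ≤ ν ∧ pc.2 ≤ ν) →
      (∀ pc ∈ l2, pc.1 ≤ ν ∧ pc.2 ≤ ν) → l1.map g = l2.map g → l1 = l2 := by
    intro l1
    induction l1 with
    | nil => intro l2 _ _ h; cases l2 <;> simp_all
    | cons a t ih =>
      intro l2 hb1 hb2 h
      cases l2 with
      | nil => simp at h
      | cons b u =>
        simp only [List.map_cons, List.cons.injEq] at h
        have hab : a = b := by
          have h1 := hb1 a (List.mem_cons_self)
          have h2 := hb2 b (List.mem_cons_self)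
          have := h.1
          rw [hg] at this
          simp only [Prod.mk.injEq, Fin.mk.injEq] at this
          have e1 : min a.1 ν = min b.1 ν := this.1
          have e2 : min a.2 ν = min b.2 ν := this.2
          ext
          · omega
          · omega
        rw [hab, ih u (fun pc hpc => hb1 pc (List.mem_cons_of_mem a hpc))
          (fun pc hpc => hb2 pc (List.mem_cons_of_mem b hpc)) h.2]
  refine Finite.of_injective
    (fun l : NCC ν => (⟨l.1.map g, by
      show (l.1.map g).length ≤ ν
      rw [List.length_map]; exact (ncc_bounds l.2).1⟩ :
      {l : List (Fin (ν + 1) × Fin (ν + 1)) | l.length ≤ ν})) ?_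
  intro l1 l2 h
  simp only [Subtype.mk.injEq] at h
  exact Subtype.ext (key l1.1 l2.1 (ncc_bounds l1.2).2 (ncc_bounds l2.2).2 h)

def consMap (ν : ℕ) : (Σ p : Fin (ν + 1), Fin (p.1 + 1) × NCC (ν - p.1)) → NCC (ν + 1) :=
  fun x => ⟨(x.1.1 + 1, x.2.1.1 + 1) :: x.2.2.1, by
    constructor
    · intro pc hpc
      rcases List.mem_cons.mp hpc with rfl | hpc
      · have := x.2.1.2; omega
      · exact x.2.2.2.1 pc hpc
    · have hs := x.2.2.2.2
      have hp := x.1.2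
      simp only [List.map_cons, List.sum_cons, hs]
      omega⟩

lemma consMap_bij (ν : ℕ) : Function.Bijective (consMap ν) := by
  constructor
  · rintro ⟨p, c, t⟩ ⟨q, d, u⟩ h
    replace h := congrArg Subtype.val h
    simp only [consMap, Subtype.mk.injEq, List.cons.injEq, Prod.mk.injEq] at h
    obtain ⟨⟨h1, h2⟩, h3⟩ := h
    have hpq : p = q := Fin.ext (by omega)
    subst hpq
    have hcd : c = d := Fin.ext (by omega)
    subst hcd
    have htu : t = u := Subtype.ext h3
    subst htu
    rfl
  · rintro ⟨l, hl⟩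
    match l, hl with
    | [], hl => exact absurd hl.2 (by simp)
    | (a, b) :: t, hl =>
      have hab := hl.1 (a, b) (List.mem_cons_self)
      simp only at hab
      have hsum : a + (t.map Prod.fst).sum = ν + 1 := by
        have := hl.2; simp only [List.map_cons, List.sum_cons] at this; omega
      refine ⟨⟨⟨a - 1, by omega⟩, ⟨b - 1, by show b - 1 < a - 1 + 1; omega⟩,
        ⟨t, fun pc hpc => hl.1 pc (List.mem_cons_of_mem _ hpc), ?_⟩⟩, ?_⟩
      · show (t.map Prod.fst).sum = ν - (a - 1)
        omega
      · apply Subtype.ext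
        show (a - 1 + 1, b - 1 + 1) :: t = (a, b) :: t
        simp only [List.cons.injEq, Prod.mk.injEq]
        exact ⟨⟨by omega, by omega⟩, trivial⟩

lemma card_zero : Nat.card (NCC 0) = 1 := by
  have e : ∀ x : NCC 0, x = ⟨[], by constructor <;> simp⟩ := by
    rintro ⟨l, hl⟩
    match l, hl with
    | [], _ => rfl
    | (a, b) :: t, hl =>
      exfalso
      have hab := hl.1 (a, b) (List.mem_cons_self)
      have := hl.2
      simp only [List.map_cons, List.sum_cons] at this
      simp at hab
      omega
  haveI : Subsingleton (NCC 0) := ⟨fun a b => (e a).trans (e b).symm⟩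
  haveI : Nonempty (NCC 0) := ⟨⟨[], by constructor <;> simp⟩⟩
  exact Nat.card_eq_one_iff_unique.mpr ⟨inferInstance, inferInstance⟩

lemma card_succ (ν : ℕ) :
    Nat.card (NCC (ν + 1)) = ∑ p ∈ range (ν + 1), (p + 1) * Nat.card (NCC (ν - p)) := by
  classical
  rw [← Nat.card_eq_of_bijective _ (consMap_bij ν)]
  letI : ∀ p : Fin (ν + 1), Fintype (NCC (ν - p.1)) := fun p => Fintype.ofFinite _
  rw [Nat.card_eq_fintype_card, Fintype.card_sigma]
  have : ∀ p : Fin (ν + 1), Fintype.card (Fin (p.1 + 1) × NCC (ν - p.1))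
      = (p.1 + 1) * Nat.card (NCC (ν - p.1)) := by
    intro p
    rw [Fintype.card_prod, Fintype.card_fin, Nat.card_eq_fintype_card]
  rw [Fintype.sum_congr _ _ this]
  exact Fin.sum_univ_eq_sum_range (fun p => (p + 1) * Nat.card (NCC (ν - p))) (ν + 1)

lemma card_NCC : ∀ ν : ℕ, Nat.card (NCC ν) = if ν = 0 then 1 else Sval ν := by
  intro ν
  induction ν using Nat.strong_induction_on with
  | _ ν ih =>
    match ν with
    | 0 => simpa using card_zero
    | ν + 1 =>
      rw [card_succ]
      have step : ∀ p ∈ range (ν + 1), (p + 1) * Nat.card (NCC (ν - p))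
          = (p + 1) * (if ν - p = 0 then 1 else Sval (ν - p)) := by
        intro p hp
        rw [ih (ν - p) (by omega)]
      rw [sum_congr rfl step]
      have refl : ∑ p ∈ range (ν + 1), (p + 1) * (if ν - p = 0 then 1 else Sval (ν - p))
          = ∑ q ∈ range (ν + 1), (ν + 1 - q) * (if q = 0 then 1 else Sval q) := by
        rw [← Finset.sum_range_reflect]
        refine sum_congr rfl fun q hq => ?_
        rw [Finset.mem_range] at hq
        congr 1
        · omega
        · congr 1
          · simp only [eq_iff_iff]; omega
          · congr 1; omega
      rw [refl]
      have hins : range (ν + 1) = insert 0 (Icc 1 ν) := by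
        ext x; simp only [Finset.mem_range, mem_Icc, mem_insert]; omega
      rw [hins, sum_insert (by simp)]
      have hinner : ∑ q ∈ Icc 1 ν, (ν + 1 - q) * (if q = 0 then 1 else Sval q)
          = ∑ q ∈ Icc 1 ν, (ν + 1 - q) * Sval q := by
        refine sum_congr rfl fun q hq => ?_
        rw [mem_Icc] at hq
        rw [if_neg (by omega)]
      rw [hinner, if_neg (Nat.succ_ne_zero ν), keyS]
      norm_num

lemma halfEq {α : Type*} {l : List α} {k : ℕ} (hrev : l.reverse = l)
    (hlen : l.length = k + k) : l.drop k = (l.take k).reverse := by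
  apply List.ext_getElem
  · simp only [List.length_drop, List.length_reverse, List.length_take, hlen]
    omega
  · intro i h1 h2
    rw [List.getElem_drop]
    rw [List.getElem_reverse]
    rw [List.getElem_take]
    have hki : k + i < l.length := by
      simp only [List.length_drop] at h1; omega
    rw [List.getElem_of_eq hrev.symm hki, List.getElem_reverse]
    congr 1
    simp only [List.length_take, List.length_drop, List.length_reverse] at h1 h2 ⊢
    omega

def dbl (ν : ℕ) : NCC ν →
    {l : List (ℕ × ℕ) // IsNColourComposition (2 * ν) l ∧ l.reverse = l ∧ Even l.length} :=
  fun h => ⟨h.1 ++ h.1.reverse, by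
    refine ⟨⟨?_, ?_⟩, ?_, ?_⟩
    · intro pc hpc
      rcases List.mem_append.mp hpc with hm | hm
      · exact h.2.1 pc hm
      · exact h.2.1 pc (List.mem_reverse.mp hm)
    · rw [List.map_append, List.sum_append, List.map_reverse, List.sum_reverse, h.2.2]
      ring
    · rw [List.reverse_append, List.reverse_reverse]
    · rw [List.length_append, List.length_reverse]
      exact ⟨h.1.length, rfl⟩⟩

lemma dbl_bij (ν : ℕ) : Function.Bijective (dbl ν) := by
  constructor
  · rintro ⟨l1, h1⟩ ⟨l2, h2⟩ h
    simp only [dbl, Subtype.mk.injEq] at h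
    have hlen : l1.length = l2.length := by
      have := congrArg List.length h
      simp only [List.length_append, List.length_reverse] at this
      omega
    exact Subtype.ext (List.append_inj_left h hlen)
  · rintro ⟨l, hc, hrev, heven⟩
    obtain ⟨k, hk⟩ := heven
    have hsplit : l = l.take k ++ (l.take k).reverse := by
      conv_lhs => rw [← List.take_append_drop k l, halfEq hrev hk]
    have hsum : ((l.take k).map Prod.fst).sum = ν := by
      have h2 := hc.2
      rw [hsplit, List.map_append, List.sum_append, List.map_reverse,
        List.sum_reverse] at h2
      omega
    refine ⟨⟨l.take k, fun pc hpc => hc.1 pc (List.take_subset k l hpc), hsum⟩, ?_⟩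
    exact Subtype.ext hsplit.symm

theorem selfinverse_even_evenparts_formula (ν : ℕ) (hν : 1 ≤ ν) :
    Nat.card {l : List (ℕ × ℕ) //
        IsNColourComposition (2 * ν) l ∧ l.reverse = l ∧ Even l.length} =
      ∑ m ∈ Finset.Icc 1 ν, Nat.choose (ν + m - 1) (2 * m - 1) := by
  rw [← Nat.card_eq_of_bijective _ (dbl_bij ν), card_NCC, if_neg (by omega)]
  rfl
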